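/- arXiv:2306.03479 — 2 statements merged into one kernel-verified Lean document; each statement's English description precedes it below -/
import Mathlib

section
/- Spectral variational identity for bounded-degree trees: fix an integer d ≥ 3. (i) For every finite tree T with maximum degree at most d and every vector u = (u_i)_{i∈V(T)} with u_i ≥ 0 and Σ_{i∈V(T)} u_i = 1, one has Σ_{{i,j}∈E(T)} √(u_i u_j) ≤ √(d−1). (ii) The supremum of Σ_{{i,j}∈E(T)} √(u_i u_j) over all such pairs (T, u) equals √(d−1). -/
/-!
Put `x = √u` and `s = √(d - 1)`, and root the tree. For an edge from `v` to its parent `p`,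
AM-GM gives `2 x_v x_p ≤ s x_v² + s⁻¹ x_p²`. Collecting these bounds at each vertex, a vertex
gets weight `s` from the edge to its parent and `s⁻¹` from each of its at most `d - 1` child
edges (at most `d` for the root), in total at most `s + (d - 1) / s = 2 s`; hence the edge sum is
at most `s ∑ u = s`.

The bound is approached by the complete `(d - 1)`-ary tree of depth `k` with mass `1 / (k + 1)` on
each level, spread evenly over the level. The parent of a vertex `b` carries `d - 1` times the mass
of `b`, so the edge from `b` to its parent contributes `s u_b`, and the edge sum is
`s (1 - u_root) = s k / (k + 1)`.
-/
open MeasureTheory ProbabilityTheory Filter Real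
open scoped ENNReal NNReal

noncomputable section

instance matrixMeasurableSpace {m n α : Type*} [MeasurableSpace α] :
    MeasurableSpace (Matrix m n α) :=
  inferInstanceAs (MeasurableSpace (m → n → α))

/-- The largest eigenvalue of a real square matrix: the supremum of its real eigenvalues. -/
def lam1 {n : ℕ} (M : Matrix (Fin n) (Fin n) ℝ) : ℝ :=
  sSup {r : ℝ | ∃ v : Fin n → ℝ, v ≠ 0 ∧ M.mulVec v = r • v}

open Classical in
/-- The sum of `f i j` over the undirected edges `{i, j}` of `G`
(assuming `f` is symmetric, each undirected edge is counted once). -/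
def edgeSum {m : ℕ} (G : SimpleGraph (Fin m)) (f : Fin m → Fin m → ℝ) : ℝ :=
  (∑ i, ∑ j, if G.Adj i j then f i j else 0) / 2

/-- The maximum degree of `G` is at most `d`. -/
def MaxDegLE {m : ℕ} (G : SimpleGraph (Fin m)) (d : ℕ) : Prop :=
  ∀ v, {w | G.Adj v w}.ncard ≤ d

namespace SimpleGraph

variable {V : Type*} {G : SimpleGraph V}

lemma isAcyclic_of_rank (f : V → ℕ) (hne : ∀ v w, G.Adj v w → f v ≠ f w)
    (hlower : ∀ v w₁ w₂, G.Adj v w₁ → G.Adj v w₂ → f w₁ < f v → f w₂ < f v → w₁ = w₂) :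
    G.IsAcyclic := by
  classical
  intro v c hc
  obtain ⟨u, hu, hmax⟩ := c.support.toFinset.exists_max_image f ⟨v, by simp⟩
  rw [List.mem_toFinset] at hu
  set c' := c.rotate u hu
  have hc' : c'.IsCycle := hc.rotate hu
  -- the two cycle neighbours of a highest vertex would both be lower neighbours
  have lower : ∀ w, G.Adj u w → w ∈ c'.support → f w < f u := fun w hw hws =>
    lt_of_le_of_ne (hmax w (by simpa [c'] using hws)) (hne u w hw).symm
  refine hc'.snd_ne_penultimate (hlower u _ _ (c'.adj_snd hc'.not_nil)
    (c'.adj_penultimate hc'.not_nil).symm ?_ ?_)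
  · exact lower _ (c'.adj_snd hc'.not_nil) (c'.getVert_mem_support _)
  · exact lower _ (c'.adj_penultimate hc'.not_nil).symm (c'.getVert_mem_support _)

lemma IsTree.eq_of_adj_of_dist_lt (hG : G.IsTree) (r : V) {v w₁ w₂ : V}
    (h₁ : G.Adj v w₁) (h₂ : G.Adj v w₂)
    (hd₁ : G.dist r w₁ < G.dist r v) (hd₂ : G.dist r w₂ < G.dist r v) : w₁ = w₂ := by
  have key : ∀ w, G.Adj v w → G.dist r w < G.dist r v →
      ∃ p : G.Walk r v, p.IsPath ∧ p.penultimate = w := by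
    intro w hw hdw
    obtain ⟨p, hp⟩ := (hG.connected r w).exists_walk_length_eq_dist
    have := hG.dist_eq_dist_add_one_of_adj r hw
    refine ⟨p.concat hw.symm, (p.concat hw.symm).isPath_of_length_eq_dist ?_,
      p.penultimate_concat _⟩
    rw [Walk.length_concat]
    omega
  obtain ⟨p₁, hp₁, rfl⟩ := key w₁ h₁ hd₁
  obtain ⟨p₂, hp₂, rfl⟩ := key w₂ h₂ hd₂
  rw [(hG.existsUnique_path r v).unique hp₁ hp₂]

variable [Fintype V] [DecidableRel G.Adj]

lemma sum_adj_mul_le_of_rowSum_le (c : V → V → ℝ) (hpos : ∀ v w, G.Adj v w → 0 < c v w)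
    (hinv : ∀ v w, G.Adj v w → c v w * c w v = 1) {B : ℝ}
    (hrow : ∀ v, ∑ w, (if G.Adj v w then c v w else 0) ≤ B) (x : V → ℝ) :
    ∑ v, ∑ w, (if G.Adj v w then x v * x w else 0) ≤ B * ∑ v, x v ^ 2 := by
  have amgm : ∀ v w, G.Adj v w → 2 * (x v * x w) ≤ c v w * x v ^ 2 + c w v * x w ^ 2 := by
    intro v w h
    have hsq := mul_nonneg (hpos w v h.symm).le (sq_nonneg (c v w * x v - x w))
    have : c w v * (c v w * x v - x w) ^ 2 =
        c v w * x v ^ 2 - 2 * (x v * x w) + c w v * x w ^ 2 := by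
      linear_combination (c v w * x v ^ 2 - 2 * (x v * x w)) * hinv v w h
    linarith
  have hsym : ∑ v, ∑ w, (if G.Adj v w then c w v * x w ^ 2 else 0) =
      ∑ v, ∑ w, (if G.Adj v w then c v w * x v ^ 2 else 0) := by
    rw [Finset.sum_comm]
    simp only [G.adj_comm]
  have hrow' : ∑ v, ∑ w, (if G.Adj v w then c v w * x v ^ 2 else 0) ≤ B * ∑ v, x v ^ 2 := by
    rw [Finset.mul_sum]
    refine Finset.sum_le_sum fun v _ => ?_
    simp only [← ite_zero_mul, ← Finset.sum_mul]
    exact mul_le_mul_of_nonneg_right (hrow v) (sq_nonneg _)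
  have hsum : 2 * ∑ v, ∑ w, (if G.Adj v w then x v * x w else 0) ≤
      ∑ v, ∑ w, (if G.Adj v w then c v w * x v ^ 2 else 0) +
        ∑ v, ∑ w, (if G.Adj v w then c w v * x w ^ 2 else 0) := by
    rw [← Finset.sum_add_distrib, Finset.mul_sum]
    refine Finset.sum_le_sum fun v _ => ?_
    rw [← Finset.sum_add_distrib, Finset.mul_sum]
    refine Finset.sum_le_sum fun w _ => ?_
    split_ifs with h
    · exact amgm v w h
    · simp
  linarith

lemma IsTree.sum_adj_ite_dist_lt_le (hG : G.IsTree) (r : V) {d : ℕ} (hdeg : ∀ v, G.degree v ≤ d)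
    {s : ℝ} (hs : 1 ≤ s) (v : V) :
    ∑ w, (if G.Adj v w then (if G.dist r w < G.dist r v then s else s⁻¹) else 0) ≤
      d * s⁻¹ + (s - s⁻¹) := by
  set N := G.neighborFinset v
  have hparent : (N.filter fun w => G.dist r w < G.dist r v).card ≤ 1 :=
    Finset.card_le_one.mpr fun a ha b hb => by
      simp only [N, Finset.mem_filter, mem_neighborFinset] at ha hb
      exact hG.eq_of_adj_of_dist_lt r ha.1 hb.1 ha.2 hb.2
  have hN : (N.card : ℝ) ≤ d := by
    exact_mod_cast (G.card_neighborFinset_eq_degree v).trans_le (hdeg v)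
  calc ∑ w, (if G.Adj v w then (if G.dist r w < G.dist r v then s else s⁻¹) else 0)
      = ∑ w ∈ N, (s⁻¹ + if G.dist r w < G.dist r v then s - s⁻¹ else 0) := by
        rw [← Finset.sum_filter, ← neighborFinset_eq_filter]
        exact Finset.sum_congr rfl fun w _ => by split_ifs <;> ring
    _ = N.card * s⁻¹ + (N.filter fun w => G.dist r w < G.dist r v).card * (s - s⁻¹) := by
        rw [Finset.sum_add_distrib, Finset.sum_const, ← Finset.sum_filter, Finset.sum_const,
          nsmul_eq_mul, nsmul_eq_mul]
    _ ≤ d * s⁻¹ + 1 * (s - s⁻¹) := by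
        have : s⁻¹ ≤ s := (inv_le_one_of_one_le₀ hs).trans hs
        gcongr
        exact_mod_cast hparent
    _ = d * s⁻¹ + (s - s⁻¹) := by ring

lemma IsTree.sum_adj_mul_le (hG : G.IsTree) {d : ℕ} (hd : 2 ≤ d) (hdeg : ∀ v, G.degree v ≤ d)
    (x : V → ℝ) :
    ∑ v, ∑ w, (if G.Adj v w then x v * x w else 0) ≤ 2 * √((d : ℝ) - 1) * ∑ v, x v ^ 2 := by
  obtain ⟨r⟩ := hG.connected.nonempty
  set s := √((d : ℝ) - 1)
  have hd' : (2 : ℝ) ≤ d := by exact_mod_cast hd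
  have hs2 : s ^ 2 = d - 1 := Real.sq_sqrt (by linarith)
  have hs1 : 1 ≤ s := Real.one_le_sqrt.mpr (by linarith)
  have hs0 : s ≠ 0 := by positivity
  apply sum_adj_mul_le_of_rowSum_le (fun v w => if G.dist r w < G.dist r v then s else s⁻¹)
  · intro v w _
    split_ifs <;> positivity
  · intro v w h
    rcases (hG.dist_ne_of_adj r h).lt_or_gt with hlt | hlt <;> simp [hlt, hlt.not_gt, hs0]
  · intro v
    calc _ ≤ d * s⁻¹ + (s - s⁻¹) := hG.sum_adj_ite_dist_lt_le r hdeg hs1 v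
      _ = 2 * s := by
        field_simp
        linarith

end SimpleGraph

abbrev HeapVertex (q k : ℕ) := (t : Fin (k + 1)) × Fin (q ^ (t : ℕ))

namespace HeapVertex

variable {q k : ℕ}

def IsParent (a b : HeapVertex q k) : Prop :=
  (a.1 : ℕ) + 1 = b.1 ∧ (b.2 : ℕ) / q = a.2

instance : DecidableRel (IsParent (q := q) (k := k)) :=
  fun _ _ => inferInstanceAs (Decidable (_ ∧ _))

def root (q k : ℕ) : HeapVertex q k := ⟨0, ⟨0, by simp⟩⟩

lemma ext_val {a b : HeapVertex q k} (h₁ : (a.1 : ℕ) = b.1) (h₂ : (a.2 : ℕ) = b.2) : a = b := by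
  obtain ⟨t, i⟩ := a
  obtain ⟨t', i'⟩ := b
  obtain rfl : t = t' := Fin.ext h₁
  exact congrArg (Sigma.mk t) (Fin.ext h₂)

lemma eq_root_of_level_eq_zero {b : HeapVertex q k} (hb : (b.1 : ℕ) = 0) : b = root q k := by
  have : (b.2 : ℕ) < 1 := by simpa [hb] using b.2.isLt
  exact ext_val (by simpa [root] using hb) (by simp [root]; omega)

lemma IsParent.level_lt {a b : HeapVertex q k} (h : IsParent a b) : (a.1 : ℕ) < b.1 := by
  have := h.1; omega

lemma IsParent.not_isParent {a b : HeapVertex q k} (h : IsParent a b) : ¬ IsParent b a :=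
  fun h' => (h.level_lt.trans h'.level_lt).false

lemma IsParent.unique {a a' b : HeapVertex q k} (h : IsParent a b) (h' : IsParent a' b) :
    a = a' :=
  ext_val (by have := h.1; have := h'.1; omega) (by rw [← h.2, ← h'.2])

lemma IsParent.eq_of_mod_eq {a b b' : HeapVertex q k} (h : IsParent a b) (h' : IsParent a b')
    (hmod : (b.2 : ℕ) % q = b'.2 % q) : b = b' := by
  have hdiv : (b.2 : ℕ) / q = b'.2 / q := h.2.trans h'.2.symm
  refine ext_val (by have := h.1; have := h'.1; omega) ?_
  rw [← Nat.div_add_mod b.2 q, ← Nat.div_add_mod b'.2 q, hdiv, hmod]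

lemma exists_isParent (hq : 0 < q) {b : HeapVertex q k} (hb : b ≠ root q k) :
    ∃ a, IsParent a b := by
  obtain ⟨t, ht⟩ : ∃ t, (b.1 : ℕ) = t + 1 :=
    ⟨b.1 - 1, by have := mt eq_root_of_level_eq_zero hb; omega⟩
  have hdiv : (b.2 : ℕ) / q < q ^ t := by
    rw [Nat.div_lt_iff_lt_mul hq, ← pow_succ, ← ht]
    exact b.2.isLt
  exact ⟨⟨⟨t, by have := b.1.isLt; omega⟩, ⟨_, hdiv⟩⟩, ht.symm, rfl⟩

def weight (a : HeapVertex q k) : ℝ := ((q : ℝ) ^ (a.1 : ℕ))⁻¹ / (k + 1)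

lemma weight_nonneg (a : HeapVertex q k) : 0 ≤ a.weight := by
  unfold weight; positivity

lemma sum_weight (hq : 0 < q) : ∑ a : HeapVertex q k, a.weight = 1 := by
  have level : ∀ t : Fin (k + 1), ∑ i : Fin (q ^ (t : ℕ)), weight (⟨t, i⟩ : HeapVertex q k) =
      1 / (k + 1) := fun t => by
    simp only [weight, Finset.sum_const, Finset.card_univ, Fintype.card_fin, nsmul_eq_mul,
      Nat.cast_pow]
    field_simp
  simp only [Fintype.sum_sigma, level, Finset.sum_const, Finset.card_univ, Fintype.card_fin,
    nsmul_eq_mul, Nat.cast_add_one]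
  field_simp

lemma root_weight : (root q k).weight = 1 / (k + 1) := by
  simp [weight, root]

lemma IsParent.sqrt_weight_mul (hq : 0 < q) {a b : HeapVertex q k} (h : IsParent a b) :
    √(a.weight * b.weight) = √q * b.weight := by
  have hab : a.weight = q * b.weight := by
    simp only [weight, ← h.1, pow_succ]
    field_simp
  rw [hab, mul_assoc, Real.sqrt_mul (Nat.cast_nonneg q), Real.sqrt_mul_self (weight_nonneg b)]

end HeapVertex

open HeapVertex

/-- The complete `q`-ary tree of depth `k`: the children of `⟨t, i⟩` are `⟨t + 1, q * i + j⟩`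
for `j < q`. -/
def heapGraph (q k : ℕ) : SimpleGraph (HeapVertex q k) where
  Adj a b := IsParent a b ∨ IsParent b a
  symm := ⟨fun _ _ => Or.symm⟩
  loopless := ⟨fun _ h => by rcases h with h | h <;> exact h.level_lt.ne rfl⟩

instance (q k : ℕ) : DecidableRel (heapGraph q k).Adj :=
  fun a b => inferInstanceAs (Decidable (IsParent a b ∨ IsParent b a))

section

variable {q k : ℕ}

lemma heapGraph_connected (hq : 0 < q) : (heapGraph q k).Connected := by
  have reach : ∀ n (b : HeapVertex q k), (b.1 : ℕ) = n →
      (heapGraph q k).Reachable (root q k) b := by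
    intro n
    induction n with
    | zero => intro b hb; rw [eq_root_of_level_eq_zero hb]
    | succ n ih =>
      intro b hb
      obtain ⟨a, ha⟩ := exists_isParent hq (b := b) fun h => by simp [h, root] at hb
      have hab : (heapGraph q k).Adj a b := .inl ha
      exact (ih a (by have := ha.1; omega)).trans hab.reachable
  have : Nonempty (HeapVertex q k) := ⟨root q k⟩
  exact ⟨fun a b => (reach _ a rfl).symm.trans (reach _ b rfl)⟩

lemma heapGraph_isTree (hq : 0 < q) : (heapGraph q k).IsTree := by
  refine ⟨heapGraph_connected hq, SimpleGraph.isAcyclic_of_rank (fun a => (a.1 : ℕ)) ?_ ?_⟩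
  · rintro v w (h | h)
    exacts [h.level_lt.ne, h.level_lt.ne']
  · rintro v w₁ w₂ (h₁ | h₁) (h₂ | h₂) l₁ l₂
    all_goals first
      | exact absurd h₁.level_lt (by omega)
      | exact absurd h₂.level_lt (by omega)
      | exact h₁.unique h₂

lemma heapGraph_ncard_neighborSet_le (hq : 0 < q) (v : HeapVertex q k) :
    ((heapGraph q k).neighborSet v).ncard ≤ q + 1 := by
  -- a neighbour is the parent of `v` or a child, determined by its index modulo `q`
  let f : HeapVertex q k → Option (Fin q) := fun w =>
    if IsParent w v then none else some ⟨w.2 % q, Nat.mod_lt _ hq⟩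
  have hinj : Set.InjOn f ((heapGraph q k).neighborSet v) := by
    rintro w₁ (h₁ | h₁) w₂ (h₂ | h₂) hf
    · simp only [f, if_neg h₁.not_isParent, if_neg h₂.not_isParent, Option.some.injEq,
        Fin.mk.injEq] at hf
      exact h₁.eq_of_mod_eq h₂ hf
    · simp [f, h₂, h₁.not_isParent] at hf
    · simp [f, h₁, h₂.not_isParent] at hf
    · exact h₁.unique h₂
  calc ((heapGraph q k).neighborSet v).ncard
      ≤ (Set.univ : Set (Option (Fin q))).ncard :=
        Set.ncard_le_ncard_of_injOn f (fun _ _ => Set.mem_univ _) hinj Set.finite_univ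
    _ = q + 1 := by simp [Set.ncard_univ]

lemma heapGraph_sum_adj_sqrt_weight_mul (hq : 0 < q) :
    ∑ a, ∑ b, (if (heapGraph q k).Adj a b then √(a.weight * b.weight) else 0) =
      2 * (√q * (k / (k + 1))) := by
  have parent_sum : ∀ b : HeapVertex q k,
      ∑ a, (if IsParent a b then √(a.weight * b.weight) else 0) =
        √q * b.weight - if b = root q k then √q * b.weight else 0 := by
    intro b
    split_ifs with hb
    · refine (Finset.sum_eq_zero fun a _ => if_neg fun h => ?_).trans (sub_self _).symm
      simpa [hb, root] using h.level_lt
    · obtain ⟨p, hp⟩ := exists_isParent hq hb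
      rw [Finset.sum_eq_single p (fun a _ hap => if_neg fun h => hap (h.unique hp))
        (by simp), if_pos hp, hp.sqrt_weight_mul hq, sub_zero]
  have split : ∀ a b : HeapVertex q k,
      (if (heapGraph q k).Adj a b then √(a.weight * b.weight) else 0) =
        (if IsParent a b then √(a.weight * b.weight) else 0) +
          (if IsParent b a then √(b.weight * a.weight) else 0) := by
    intro a b
    by_cases h₁ : IsParent a b
    · simp [heapGraph, h₁, h₁.not_isParent]
    · by_cases h₂ : IsParent b a <;> simp [heapGraph, h₁, h₂, mul_comm]
  simp only [split, Finset.sum_add_distrib]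
  rw [Finset.sum_comm (f := fun a b => if IsParent a b then _ else 0)]
  simp only [parent_sum, Finset.sum_sub_distrib, Finset.sum_ite_eq', Finset.mem_univ, if_true,
    ← Finset.mul_sum, sum_weight hq, root_weight]
  field_simp
  ring

end

lemma MaxDegLE.degree_le {m d : ℕ} {G : SimpleGraph (Fin m)} [DecidableRel G.Adj]
    (h : MaxDegLE G d) (v : Fin m) : G.degree v ≤ d := by
  rw [← G.card_neighborFinset_eq_degree, G.neighborFinset_eq_filter]
  simpa [Set.ncard_eq_toFinset_card'] using h v

lemma maxDegLE_comap {W : Type*} (H : SimpleGraph W) {m d : ℕ} (e : Fin m ≃ W)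
    (h : ∀ w, (H.neighborSet w).ncard ≤ d) : MaxDegLE (H.comap e) d := fun v => by
  change (e ⁻¹' H.neighborSet (e v)).ncard ≤ d
  rw [Set.ncard_preimage_of_injective_subset_range e.injective (by simp)]
  exact h _

lemma edgeSum_comap {W : Type*} [Fintype W] (H : SimpleGraph W) [DecidableRel H.Adj] {m : ℕ}
    (e : Fin m ≃ W) (f : W → W → ℝ) :
    edgeSum (H.comap e) (fun i j => f (e i) (e j)) =
      (∑ a, ∑ b, if H.Adj a b then f a b else 0) / 2 := by
  unfold edgeSum
  congr 1
  exact Fintype.sum_equiv e _ _ fun i => Fintype.sum_equiv e _ _ fun j => by simp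

theorem edgeSum_sqrt_mul_le {m d : ℕ} (hd : 2 ≤ d) {T : SimpleGraph (Fin m)} (hT : T.IsTree)
    (hdeg : MaxDegLE T d) {u : Fin m → ℝ} (hu : ∀ i, 0 ≤ u i) (hsum : ∑ i, u i = 1) :
    edgeSum T (fun i j => √(u i * u j)) ≤ √((d : ℝ) - 1) := by
  classical
  have key := hT.sum_adj_mul_le hd hdeg.degree_le (fun i => √(u i))
  simp only [Real.sq_sqrt (hu _), hsum, mul_one] at key
  unfold edgeSum
  simp only [Real.sqrt_mul (hu _)]
  linarith

theorem exists_edgeSum_sqrt_mul_eq {d : ℕ} (hd : 2 ≤ d) (k : ℕ) :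
    ∃ (m : ℕ) (T : SimpleGraph (Fin m)) (u : Fin m → ℝ),
      T.IsTree ∧ MaxDegLE T d ∧ (∀ i, 0 ≤ u i) ∧ (∑ i, u i) = 1 ∧
        √((d : ℝ) - 1) * (k / (k + 1)) = edgeSum T (fun i j => √(u i * u j)) := by
  have hq : 0 < d - 1 := by omega
  let e := (Fintype.equivFin (HeapVertex (d - 1) k)).symm
  refine ⟨_, (heapGraph (d - 1) k).comap e, fun i => (e i).weight,
    (SimpleGraph.Iso.comap e _).isTree_iff.mpr (heapGraph_isTree hq),
    maxDegLE_comap _ e fun w => (heapGraph_ncard_neighborSet_le hq w).trans (by omega),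
    fun i => weight_nonneg _, (e.sum_comp weight).trans (sum_weight hq), ?_⟩
  rw [edgeSum_comap _ e (fun a b => √(a.weight * b.weight)),
    heapGraph_sum_adj_sqrt_weight_mul hq, Nat.cast_pred (by omega)]
  ring

/-- **Spectral variational identity for bounded-degree trees.** -/
theorem tree_sqrt_functional
    (d : ℕ) (hd : 3 ≤ d) :
    (∀ (m : ℕ) (T : SimpleGraph (Fin m)), T.IsTree → MaxDegLE T d →
      ∀ u : Fin m → ℝ, (∀ i, 0 ≤ u i) → (∑ i, u i) = 1 →
        edgeSum T (fun i j => Real.sqrt (u i * u j)) ≤ Real.sqrt ((d : ℝ) - 1)) ∧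
    sSup {x : ℝ | ∃ (m : ℕ) (T : SimpleGraph (Fin m)) (u : Fin m → ℝ),
        T.IsTree ∧ MaxDegLE T d ∧ (∀ i, 0 ≤ u i) ∧ (∑ i, u i) = 1 ∧
        x = edgeSum T (fun i j => Real.sqrt (u i * u j))} = Real.sqrt ((d : ℝ) - 1) := by
  have hd₂ : 2 ≤ d := by omega
  refine ⟨fun m T hT hdeg u hu hsum => edgeSum_sqrt_mul_le hd₂ hT hdeg hu hsum, ?_⟩
  refine csSup_eq_of_forall_le_of_forall_lt_exists_gt ⟨_, exists_edgeSum_sqrt_mul_eq hd₂ 0⟩ ?_ ?_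
  · rintro x ⟨m, T, u, hT, hdeg, hu, hsum, rfl⟩
    exact edgeSum_sqrt_mul_le hd₂ hT hdeg hu hsum
  · intro w hw
    have hlim : Tendsto (fun k : ℕ => √((d : ℝ) - 1) * (k / (k + 1))) atTop
        (nhds √((d : ℝ) - 1)) := by
      simpa using (tendsto_natCast_div_add_atTop (1 : ℝ)).const_mul √((d : ℝ) - 1)
    obtain ⟨k, hk⟩ := (hlim.eventually (lt_mem_nhds hw)).exists
    exact ⟨_, exists_edgeSum_sqrt_mul_eq hd₂ k, hk⟩
end
end

section
/- Tail bound for sums of α-th powers of truncated heavy-tailed random variables: let α > 0, b > 1, C ≥ 1, let m be a positive integer and L > m a real number. Let Y_1, …, Y_m be independent real random variables such that for each i, |Y_i| ≥ b^{1/α} almost surely and P(|Y_i| ≥ x) ≤ C·e^{b}·e^{−x^α} for all x > b^{1/α}. Then P( |Y_1|^α + ⋯ + |Y_m|^α ≥ L ) ≤ (CL/m)^m · e^{−L + m + mb}. -/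
open MeasureTheory ProbabilityTheory Filter Real
open scoped ENNReal NNReal

noncomputable section

/-!
Chernoff's bound with parameter `s = 1 - m / L`. Writing `X i = |Y i| ^ α`, the hypothesis says
`P(X i ≥ t) ≤ C e^b e^{-t}` for `t > b`, so by the layer-cake formula, splitting at `e^{s b}`,
`E e^{s X i} ≤ e^{s b} + C e^{s b} s / (1 - s) ≤ C e^b / (1 - s) = C e^b L / m`. Independence
multiplies these bounds, and `e^{-s L} = e^{-L + m}`.
-/

open Set

section ExponentialTail

variable {Ω : Type*} [MeasurableSpace Ω] {P : Measure Ω} {X : Ω → ℝ} {b K s : ℝ}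

lemma measure_exp_mul_ge_le_of_tail (hs : 0 < s)
    (htail : ∀ t, b < t → P {ω | t ≤ X ω} ≤ ENNReal.ofReal (K * exp (-t)))
    {u : ℝ} (hu : exp (s * b) < u) :
    P {ω | u ≤ exp (s * X ω)} ≤ ENNReal.ofReal (K * u ^ (-1 / s)) := by
  have hu0 : 0 < u := (exp_pos _).trans hu
  have hbu : b < log u / s := by
    rw [lt_div_iff₀ hs, mul_comm, ← log_exp (s * b)]
    exact log_lt_log (exp_pos _) hu
  have hset : {ω | u ≤ exp (s * X ω)} = {ω | log u / s ≤ X ω} := by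
    ext ω
    rw [mem_ofPred_eq, mem_ofPred_eq, ← log_le_iff_le_exp hu0, div_le_iff₀ hs, mul_comm]
  rw [hset, rpow_def_of_pos hu0]
  convert htail _ hbu using 4
  ring

lemma integral_Ioi_exp_mul_rpow (hs0 : 0 < s) (hs1 : s < 1) :
    ∫ u in Ioi (exp (s * b)), u ^ (-1 / s) = exp ((s - 1) * b) * (s / (1 - s)) := by
  have hexp : -1 / s + 1 = -((1 - s) / s) := by field_simp; ring
  rw [integral_Ioi_rpow_of_lt (by rw [neg_div, neg_lt_neg_iff]; exact one_lt_one_div hs0 hs1)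
    (exp_pos _), hexp, ← exp_mul]
  rw [div_neg, neg_div, neg_neg, div_div_eq_mul_div, mul_div_assoc]
  congr 2
  field_simp
  ring

lemma lintegral_exp_mul_le_of_tail [IsProbabilityMeasure P] (hX : Measurable X)
    (hK : 0 ≤ K) (hs0 : 0 < s) (hs1 : s < 1)
    (htail : ∀ t, b < t → P {ω | t ≤ X ω} ≤ ENNReal.ofReal (K * exp (-t))) :
    ∫⁻ ω, ENNReal.ofReal (exp (s * X ω)) ∂P ≤
      ENNReal.ofReal (exp (s * b) + K * (exp ((s - 1) * b) * (s / (1 - s)))) := by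
  set A := exp (s * b)
  have hA : 0 < A := exp_pos _
  rw [lintegral_eq_lintegral_meas_le P (Eventually.of_forall fun ω => (exp_pos _).le)
    (hX.const_mul s).exp.aemeasurable, ← Ioc_union_Ioi_eq_Ioi hA.le,
    lintegral_union measurableSet_Ioi (Ioc_disjoint_Ioi le_rfl)]
  have hlow : ∫⁻ u in Ioc 0 A, P {ω | u ≤ exp (s * X ω)} ≤ ENNReal.ofReal A :=
    calc ∫⁻ u in Ioc 0 A, P {ω | u ≤ exp (s * X ω)}
        ≤ ∫⁻ _ in Ioc 0 A, 1 := lintegral_mono fun _ => prob_le_one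
      _ = ENNReal.ofReal A := by rw [setLIntegral_one, volume_Ioc, sub_zero]
  have hhigh : ∫⁻ u in Ioi A, P {ω | u ≤ exp (s * X ω)} ≤
      ENNReal.ofReal (K * (exp ((s - 1) * b) * (s / (1 - s)))) :=
    calc ∫⁻ u in Ioi A, P {ω | u ≤ exp (s * X ω)}
        ≤ ∫⁻ u in Ioi A, ENNReal.ofReal (K * u ^ (-1 / s)) :=
          setLIntegral_mono (by fun_prop) fun u hu =>
            measure_exp_mul_ge_le_of_tail hs0 htail hu
      _ = ENNReal.ofReal (∫ u in Ioi A, K * u ^ (-1 / s)) := by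
          rw [ofReal_integral_eq_lintegral_ofReal]
          · exact (integrableOn_Ioi_rpow_of_lt
              (by rw [neg_div, neg_lt_neg_iff]; exact one_lt_one_div hs0 hs1) hA).const_mul _
          · filter_upwards [self_mem_ae_restrict measurableSet_Ioi] with u hu
            have : 0 < u := hA.trans hu
            positivity
      _ = _ := by rw [integral_const_mul, integral_Ioi_exp_mul_rpow hs0 hs1]
  calc _ ≤ ENNReal.ofReal A + ENNReal.ofReal (K * (exp ((s - 1) * b) * (s / (1 - s)))) :=
        add_le_add hlow hhigh
    _ = _ := (ENNReal.ofReal_add hA.le (by have := hs1.le; positivity)).symm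

lemma integrable_exp_mul_of_tail [IsProbabilityMeasure P] (hX : Measurable X)
    (hK : 0 ≤ K) (hs0 : 0 < s) (hs1 : s < 1)
    (htail : ∀ t, b < t → P {ω | t ≤ X ω} ≤ ENNReal.ofReal (K * exp (-t))) :
    Integrable (fun ω => exp (s * X ω)) P := by
  refine ⟨(hX.const_mul s).exp.aestronglyMeasurable, ?_⟩
  rw [hasFiniteIntegral_iff_ofReal (Eventually.of_forall fun ω => (exp_pos _).le)]
  exact (lintegral_exp_mul_le_of_tail hX hK hs0 hs1 htail).trans_lt ENNReal.ofReal_lt_top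

lemma mgf_le_of_tail [IsProbabilityMeasure P] {C : ℝ} (hX : Measurable X) (hb : 0 ≤ b)
    (hC : 1 ≤ C) (hs0 : 0 < s) (hs1 : s < 1)
    (htail : ∀ t, b < t → P {ω | t ≤ X ω} ≤ ENNReal.ofReal (C * exp b * exp (-t))) :
    mgf X P s ≤ C * exp b / (1 - s) := by
  have h1s : 0 < 1 - s := sub_pos.mpr hs1
  have hK : 0 ≤ C * exp b := by have := zero_le_one.trans hC; positivity
  have hmgf : mgf X P s ≤ exp (s * b) + C * exp b * (exp ((s - 1) * b) * (s / (1 - s))) := by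
    rw [mgf, integral_eq_lintegral_of_nonneg_ae (Eventually.of_forall fun ω => (exp_pos _).le)
      (hX.const_mul s).exp.aestronglyMeasurable]
    refine ENNReal.toReal_le_of_le_ofReal (by positivity) ?_
    exact lintegral_exp_mul_le_of_tail hX hK hs0 hs1 htail
  have hexp : exp b * exp ((s - 1) * b) = exp (s * b) := by rw [← exp_add]; ring_nf
  calc mgf X P s ≤ exp (s * b) + C * exp b * (exp ((s - 1) * b) * (s / (1 - s))) := hmgf
    _ = exp (s * b) * (1 + C * s / (1 - s)) := by rw [← hexp]; ring
    _ ≤ exp (s * b) * (C / (1 - s)) := by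
        gcongr
        rw [le_div_iff₀ h1s, add_mul, div_mul_cancel₀ _ h1s.ne']
        nlinarith
    _ ≤ exp b * (C / (1 - s)) := by
        gcongr
        nlinarith
    _ = C * exp b / (1 - s) := by ring

end ExponentialTail

lemma measure_rpow_abs_ge_le_of_tail {Ω : Type*} [MeasurableSpace Ω] {P : Measure Ω}
    {Y : Ω → ℝ} {α b K : ℝ} (hα : 0 < α) (hb : 0 ≤ b)
    (htail : ∀ x, b ^ (1 / α) < x →
      P {ω | x ≤ |Y ω|} ≤ ENNReal.ofReal (K * exp (-x ^ α)))
    {t : ℝ} (ht : b < t) :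
    P {ω | t ≤ |Y ω| ^ α} ≤ ENNReal.ofReal (K * exp (-t)) := by
  have ht0 : 0 ≤ t := hb.trans ht.le
  have hset : {ω | t ≤ |Y ω| ^ α} = {ω | t ^ (1 / α) ≤ |Y ω|} := by
    ext ω
    rw [mem_ofPred_eq, mem_ofPred_eq, one_div, rpow_inv_le_iff_of_pos ht0 (abs_nonneg _) hα]
  rw [hset]
  simpa only [one_div, rpow_inv_rpow ht0 hα.ne'] using
    htail _ (rpow_lt_rpow hb ht (by positivity))

lemma measureReal_sum_ge_le_of_mgf_le {Ω ι : Type*} [MeasurableSpace Ω] [Fintype ι]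
    {P : Measure Ω} {X : ι → Ω → ℝ} {s M : ℝ} (hindep : iIndepFun X P)
    (hmeas : ∀ i, Measurable (X i)) (hs : 0 ≤ s)
    (hint : ∀ i, Integrable (fun ω => exp (s * X i ω)) P) (hM : ∀ i, mgf (X i) P s ≤ M)
    (L : ℝ) :
    P.real {ω | L ≤ ∑ i, X i ω} ≤ exp (-s * L) * M ^ Fintype.card ι := by
  have := hindep.isProbabilityMeasure
  have hchernoff := measure_ge_le_exp_mul_mgf (X := ∑ i, X i) (μ := P) L hs
    (hindep.integrable_exp_mul_sum hmeas fun i _ => hint i)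
  rw [hindep.mgf_sum hmeas] at hchernoff
  simp only [Finset.sum_apply] at hchernoff
  refine hchernoff.trans (mul_le_mul_of_nonneg_left ?_ (exp_pos _).le)
  calc ∏ i, mgf (X i) P s ≤ ∏ _i : ι, M :=
        Finset.prod_le_prod (fun _ _ => mgf_nonneg) fun i _ => hM i
    _ = M ^ Fintype.card ι := Finset.prod_const M

theorem truncated_weibull_sum_tail_general
    (α b C : ℝ) (hα : 0 < α) (hb : 1 < b) (hC : 1 ≤ C)
    (m : ℕ) (hm : 0 < m) (L : ℝ) (hL : (m : ℝ) < L)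
    {Ω : Type*} [MeasurableSpace Ω] (P : Measure Ω) [IsProbabilityMeasure P]
    (Y : Fin m → Ω → ℝ) (hmeas : ∀ i, Measurable (Y i))
    (hindep : iIndepFun Y P)
    (htail : ∀ i, ∀ x : ℝ, b ^ (1 / α) < x →
      P {ω | x ≤ |Y i ω|} ≤
        ENNReal.ofReal (C * Real.exp b * Real.exp (-x ^ α))) :
    P {ω | L ≤ ∑ i, |Y i ω| ^ α} ≤
      ENNReal.ofReal ((C * L / m) ^ m * Real.exp (-L + m + m * b)) := by
  have hm0 : (0 : ℝ) < m := Nat.cast_pos.mpr hm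
  have hL0 : 0 < L := hm0.trans hL
  set s := 1 - m / L with hs
  have h1s : 1 - s = m / L := sub_sub_cancel _ _
  have hexponent : -s * L = -L + m := by rw [hs]; field_simp; ring
  have hs0 : 0 < s := sub_pos.mpr ((div_lt_one hL0).mpr hL)
  have hs1 : s < 1 := sub_lt_self _ (div_pos hm0 hL0)
  have hpow : Measurable fun x : ℝ => |x| ^ α := by fun_prop
  set X : Fin m → Ω → ℝ := fun i ω => |Y i ω| ^ α
  have hK : 0 ≤ C * exp b := mul_nonneg (by linarith) (exp_pos b).le
  have hXmeas : ∀ i, Measurable (X i) := fun i => hpow.comp (hmeas i)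
  have hXtail : ∀ i t, b < t →
      P {ω | t ≤ X i ω} ≤ ENNReal.ofReal (C * exp b * exp (-t)) :=
    fun i _ => measure_rpow_abs_ge_le_of_tail hα (by linarith) (htail i)
  have hchernoff := measureReal_sum_ge_le_of_mgf_le (hindep.comp _ fun _ => hpow) hXmeas hs0.le
    (fun i => integrable_exp_mul_of_tail (hXmeas i) hK hs0 hs1 (hXtail i))
    (fun i => mgf_le_of_tail (hXmeas i) (by linarith) hC hs0 hs1 (hXtail i)) L
  rw [ENNReal.le_ofReal_iff_toReal_le (measure_ne_top _ _) (by positivity)]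
  refine hchernoff.trans_eq ?_
  rw [Fintype.card_fin, h1s, hexponent, exp_add (-L + m), exp_nat_mul]
  field_simp
  rw [← mul_pow, mul_div_right_comm]

/-- **Tail bound for sums of `α`-th powers of truncated heavy-tailed random variables.** -/
theorem truncated_weibull_sum_tail
    (α b C : ℝ) (hα : 0 < α) (hb : 1 < b) (hC : 1 ≤ C)
    (m : ℕ) (hm : 0 < m) (L : ℝ) (hL : (m : ℝ) < L)
    {Ω : Type*} [MeasurableSpace Ω] (P : Measure Ω) [IsProbabilityMeasure P]
    (Y : Fin m → Ω → ℝ) (hmeas : ∀ i, Measurable (Y i))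
    (hindep : iIndepFun Y P)
    (hsupp : ∀ i, ∀ᵐ ω ∂P, b ^ (1 / α) ≤ |Y i ω|)
    (htail : ∀ i, ∀ x : ℝ, b ^ (1 / α) < x →
      P {ω | x ≤ |Y i ω|} ≤
        ENNReal.ofReal (C * Real.exp b * Real.exp (-x ^ α))) :
    P {ω | L ≤ ∑ i, |Y i ω| ^ α} ≤
      ENNReal.ofReal ((C * L / m) ^ m * Real.exp (-L + m + m * b)) :=
  truncated_weibull_sum_tail_general α b C hα hb hC m hm L hL P Y hmeas hindep htail
end
end
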